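/- Let F be a field and let H1, H2 be matrices with the same number of rows m with rank([H1 H2]) = m (full row rank). If M2 is any matrix such that H2·M2 is defined, then rank([H1 H2·M2]) ≥ m − rank(H2) + rank(H2·M2). -/

import Mathlib

/-!
Let `U`, `V`, `W` be the column spaces of `H1`, `H2`, `H2 * M2`, so that `W ≤ V`. By
Grassmann's formula, `dim (U ⊔ V) - dim V = dim U - dim (U ⊓ V) ≤ dim U - dim (U ⊓ W)
= dim (U ⊔ W) - dim W`, and `dim (U ⊔ V) = m` by hypothesis.
-/

open Matrix Module

theorem Submodule.finrank_sup_add_finrank_le_of_le {K V : Type*} [DivisionRing K]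
    [AddCommGroup V] [Module K V] [FiniteDimensional K V] (U : Submodule K V)
    {W X : Submodule K V} (hWX : W ≤ X) :
    finrank K ↥(U ⊔ X) + finrank K W ≤ finrank K ↥(U ⊔ W) + finrank K X := by
  have hX := finrank_sup_add_finrank_inf_eq U X
  have hW := finrank_sup_add_finrank_inf_eq U W
  have hinf : finrank K ↥(U ⊓ W) ≤ finrank K ↥(U ⊓ X) :=
    Submodule.finrank_mono (inf_le_inf_left U hWX)
  omega

namespace Matrix

variable {R : Type*} {m n₁ n₂ p : Type*} [Fintype n₁] [Fintype n₂]

theorem range_mulVecLin_fromCols [CommSemiring R] (A : Matrix m n₁ R) (B : Matrix m n₂ R) :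
    LinearMap.range (fromCols A B).mulVecLin =
      LinearMap.range A.mulVecLin ⊔ LinearMap.range B.mulVecLin := by
  have hcol : (fromCols A B).col = Sum.elim A.col B.col := by
    ext (i | i) <;> rfl
  simp only [range_mulVecLin, hcol, Set.Sum.elim_range, Submodule.span_union]

theorem range_mulVecLin_mul_le [CommSemiring R] [Fintype p] (A : Matrix m n₁ R)
    (B : Matrix n₁ p R) :
    LinearMap.range (A * B).mulVecLin ≤ LinearMap.range A.mulVecLin := by
  rw [mulVecLin_mul]
  exact LinearMap.range_comp_le_range _ _

variable [Field R]

theorem rank_le_rank_fromCols_right (A : Matrix m n₁ R) (B : Matrix m n₂ R) :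
    B.rank ≤ (fromCols A B).rank := by
  rw [rank, rank, range_mulVecLin_fromCols]
  exact Submodule.finrank_mono le_sup_right

theorem rank_fromCols_add_rank_mul_le [Fintype m] [Fintype p] (A : Matrix m n₁ R)
    (B : Matrix m n₂ R) (C : Matrix n₂ p R) :
    (fromCols A B).rank + (B * C).rank ≤ (fromCols A (B * C)).rank + B.rank := by
  rw [rank, rank, rank, rank, range_mulVecLin_fromCols, range_mulVecLin_fromCols]
  exact Submodule.finrank_sup_add_finrank_le_of_le _ (range_mulVecLin_mul_le B C)

end Matrix

/-- If `[H1 H2]` has full row rank `m`, then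
`rank [H1 H2·M2] ≥ m - rank H2 + rank (H2·M2)`. -/
theorem stmt_16 {F : Type*} [Field F] {m n1 n2 p : ℕ}
    (H1 : Matrix (Fin m) (Fin n1) F) (H2 : Matrix (Fin m) (Fin n2) F)
    (hfull : (Matrix.fromCols H1 H2).rank = m)
    (M2 : Matrix (Fin n2) (Fin p) F) :
    (Matrix.fromCols H1 (H2 * M2)).rank ≥ m - H2.rank + (H2 * M2).rank := by
  have hsub := rank_fromCols_add_rank_mul_le H1 H2 M2
  have hH2 := rank_le_rank_fromCols_right H1 H2
  omega
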